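/- arXiv:1204.1100 — 4 statements merged into one kernel-verified Lean document; each statement's English description precedes it below -/
import Mathlib

section
/- Let X be a non-empty Polish space and let h be a fixed gauge function. Then the set of compact subsets K of X with Hausdorff measure H^h(K) = 0 is comeager in the hyperspace K(X) of non-empty compact subsets of X with the Hausdorff metric. -/
open MeasureTheory Filter Set TopologicalSpace
open scoped ENNReal Topology

/-!
A compact set covered by finitely many open sets `Uᵢ` of diameter at most `ε` with
`∑ h (diam Uᵢ) ≤ ε` stays so covered under small Hausdorff perturbations, so for each `ε > 0`
these compact sets form an open set in `K(X)`. It is also dense, since finite sets are dense in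
`K(X)` and a finite set of `N` points is covered by `N` balls of so small a radius `r` that
`N h(2r) ≤ ε`, as `h(0+) = 0`. A compact set in the intersection over `ε = 1/n` of these dense
open sets has covers of arbitrarily small mesh and arbitrarily small `h`-sum, hence `ℋ^h(K) = 0`.
-/

/-- A gauge function: non-decreasing, right-continuous, vanishing exactly at `0`. -/
def IsGauge (h : ENNReal → ENNReal) : Prop :=
  Monotone h ∧ (∀ x, h x = 0 ↔ x = 0) ∧
    ∀ x : ENNReal, Tendsto h (nhdsWithin x (Set.Ioi x)) (nhds (h x))

open Metric (ediam eball)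

section SmallOpenCover

variable {X : Type*} [PseudoEMetricSpace X]

def HasSmallOpenCover (h : ℝ≥0∞ → ℝ≥0∞) (ε : ℝ≥0∞) (s : Set X) : Prop :=
  ∃ T : Finset (Set X),
    (∀ U ∈ T, IsOpen U ∧ ediam U ≤ ε) ∧ ∑ U ∈ T, h (ediam U) ≤ ε ∧ s ⊆ ⋃₀ ↑T

theorem isOpen_setOf_hasSmallOpenCover (h : ℝ≥0∞ → ℝ≥0∞) (ε : ℝ≥0∞) :
    IsOpen {K : NonemptyCompacts X | HasSmallOpenCover h ε (K : Set X)} := by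
  refine isOpen_iff_forall_mem_open.2 fun K ⟨T, hT, hsum, hKT⟩ => ?_
  refine ⟨{K' : NonemptyCompacts X | (K' : Set X) ⊆ ⋃₀ ↑T}, fun K' hK' => ⟨T, hT, hsum, hK'⟩, ?_, hKT⟩
  exact NonemptyCompacts.isOpen_subsets_of_isOpen (isOpen_sUnion fun U hU => (hT U hU).1)

theorem Set.Finite.hasSmallOpenCover {h : ℝ≥0∞ → ℝ≥0∞} (hmono : Monotone h)
    (h0 : Tendsto h (𝓝[>] 0) (𝓝 0)) {ε : ℝ≥0∞} (hε : 0 < ε) {s : Set X} (hs : s.Finite) :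
    HasSmallOpenCover h ε s := by
  classical
  set N : ℝ≥0∞ := (hs.toFinset.card : ℝ≥0∞)
  obtain ⟨d, hd, hdpos, hdε⟩ : ∃ d, h d < ε / N ∧ 0 < d ∧ d ≤ ε :=
    ((h0.eventually_lt_const (ENNReal.div_pos hε.ne' (ENNReal.natCast_ne_top _))).and
      (Ioc_mem_nhdsGT hε)).exists
  have hball : ∀ x : X, ediam (eball x (d / 2)) ≤ d := fun x =>
    Metric.ediam_eball_le.trans_eq (ENNReal.mul_div_cancel two_ne_zero ENNReal.ofNat_ne_top)
  set T := hs.toFinset.image fun x => eball x (d / 2)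
  refine ⟨T, ?_, ?_, ?_⟩
  · simp only [T, Finset.forall_mem_image]
    exact fun x _ => ⟨Metric.isOpen_eball, (hball x).trans hdε⟩
  · calc ∑ U ∈ T, h (ediam U) ≤ T.card • h d := by
          refine Finset.sum_le_card_nsmul _ _ _ ?_
          simp only [T, Finset.forall_mem_image]
          exact fun x _ => hmono (hball x)
      _ ≤ N * h d := by
          rw [nsmul_eq_mul]
          gcongr
          exact Nat.cast_le.2 Finset.card_image_le
      _ ≤ N * (ε / N) := by gcongr
      _ ≤ ε := ENNReal.mul_div_le
  · intro x hx
    exact mem_sUnion_of_mem (Metric.mem_eball_self (ENNReal.half_pos hdpos.ne'))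
      (Finset.mem_image_of_mem _ (hs.mem_toFinset.2 hx))

theorem dense_setOf_hasSmallOpenCover {h : ℝ≥0∞ → ℝ≥0∞} (hmono : Monotone h)
    (h0 : Tendsto h (𝓝[>] 0) (𝓝 0)) {ε : ℝ≥0∞} (hε : 0 < ε) :
    Dense {K : NonemptyCompacts X | HasSmallOpenCover h ε (K : Set X)} :=
  NonemptyCompacts.dense_setOfPred_finite.mono fun _ hK => hK.hasSmallOpenCover hmono h0 hε

end SmallOpenCover

theorem mkMetric_eq_zero_of_hasSmallOpenCover {X : Type*} [EMetricSpace X] [MeasurableSpace X]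
    [BorelSpace X] {h : ℝ≥0∞ → ℝ≥0∞} {s : Set X} {ε : ℕ → ℝ≥0∞}
    (hε : Tendsto ε atTop (𝓝 0)) (hs : ∀ n, HasSmallOpenCover h (ε n) s) :
    Measure.mkMetric h s = 0 := by
  choose T hT hsum hcover using hs
  refine le_antisymm ?_ zero_le
  calc Measure.mkMetric h s ≤ liminf (fun n => ∑ U : T n, h (ediam (U : Set X))) atTop :=
        Measure.mkMetric_le_liminf_sum s ε hε (fun n (U : T n) => (U : Set X))
          (.of_forall fun n U => (hT n U U.2).2)
          (.of_forall fun n => (hcover n).trans_eq sUnion_eq_iUnion) h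
    _ ≤ liminf ε atTop :=
        liminf_le_liminf (.of_forall fun n => (Finset.sum_coe_sort (T n) _).trans_le (hsum n))
    _ = 0 := hε.liminf_eq

theorem generic_compact_null_for_fixed_gauge_general
    {X : Type*} [MetricSpace X]
    [MeasurableSpace X] [BorelSpace X]
    (h : ENNReal → ENNReal) (hh : IsGauge h) :
    {K : NonemptyCompacts X | Measure.mkMetric h (K : Set X) = 0} ∈
      residual (NonemptyCompacts X) := by
  obtain ⟨hmono, hzero, hright⟩ := hh
  have h0 : Tendsto h (𝓝[>] 0) (𝓝 0) := by
    simpa only [(hzero 0).2 rfl] using hright 0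
  have hpos : ∀ n : ℕ, 0 < (n : ℝ≥0∞)⁻¹ := fun n => ENNReal.inv_pos.2 (ENNReal.natCast_ne_top n)
  refine mem_of_superset (countable_iInter_mem.2 fun n => residual_of_dense_open
    (isOpen_setOf_hasSmallOpenCover h _) (dense_setOf_hasSmallOpenCover hmono h0 (hpos n))) ?_
  exact fun K hK => mkMetric_eq_zero_of_hasSmallOpenCover ENNReal.tendsto_inv_nat_nhds_zero
    (mem_iInter.1 hK)

/-- For a fixed gauge function `h`, the generic non-empty compact subset `K` of a
non-empty Polish space `X` satisfies `ℋ^h(K) = 0`. -/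
theorem generic_compact_null_for_fixed_gauge
    {X : Type*} [MetricSpace X] [Nonempty X] [CompleteSpace X] [SeparableSpace X]
    [MeasurableSpace X] [BorelSpace X]
    (h : ENNReal → ENNReal) (hh : IsGauge h) :
    {K : NonemptyCompacts X | Measure.mkMetric h (K : Set X) = 0} ∈
      residual (NonemptyCompacts X) :=
  generic_compact_null_for_fixed_gauge_general h hh
end

section
/- Let X be a metric space and let S ⊆ X be an open set all of whose points are isolated points of X. Then the collection { K ∈ K(cl S) : K ⊆ S } of non-empty compact subsets of cl(S) contained in S is a dense open subset of the hyperspace K(cl S) with the Hausdorff metric. -/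
open Filter Set TopologicalSpace

/-- If `S` is an open set of isolated points of a metric space `X`, then the non-empty
compact subsets of `closure S` that are contained in `S` form a dense open subset of the
hyperspace of non-empty compact subsets of `closure S` with the Hausdorff metric. -/
theorem compacts_inside_isolated_open_set_dense_open
    {X : Type*} [MetricSpace X] (S : Set X) (hS : IsOpen S)
    (hiso : ∀ x ∈ S, IsOpen ({x} : Set X)) :
    IsOpen {K : NonemptyCompacts (closure S) | ∀ x ∈ (K : Set (closure S)), (x : X) ∈ S} ∧
      Dense {K : NonemptyCompacts (closure S) | ∀ x ∈ (K : Set (closure S)), (x : X) ∈ S} := by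
  set α := closure S
  set U : Set α := Subtype.val ⁻¹' S with hU
  have hUopen : IsOpen U := hS.preimage continuous_subtype_val
  constructor
  · -- openness
    rw [Metric.isOpen_iff]
    intro K hK
    obtain ⟨δ, hδ, hsub⟩ := K.isCompact.exists_thickening_subset_open hUopen hK
    refine ⟨δ, hδ, fun K' hK' => ?_⟩
    intro x hx
    have hfin : EMetric.hausdorffEdist (K' : Set α) (K : Set α) ≠ ⊤ :=
      Metric.hausdorffEdist_ne_top_of_nonempty_of_bounded K'.nonempty K.nonempty
        K'.isCompact.isBounded K.isCompact.isBounded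
    have h1 : Metric.infDist x (K : Set α) ≤ Metric.hausdorffDist (K' : Set α) (K : Set α) :=
      Metric.infDist_le_hausdorffDist_of_mem hx hfin
    have h2 : Metric.hausdorffDist (K' : Set α) (K : Set α) < δ := by
      rw [Metric.mem_ball, Metric.NonemptyCompacts.dist_eq] at hK'
      exact hK'
    have : x ∈ Metric.thickening δ (K : Set α) :=
      Metric.mem_thickening_iff_infDist_lt K.nonempty |>.2 (lt_of_le_of_lt h1 h2)
    exact hsub this
  · -- density
    rw [Metric.dense_iff]
    intro K ε hε
    -- cover K by balls of radius ε/3 centered in K, take a finite subcover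
    obtain ⟨t, htK, htfin, hcov⟩ :=
      K.isCompact.elim_finite_subcover_image
        (fun x (_ : x ∈ (K : Set α)) => Metric.isOpen_ball (x := x) (ε := ε/3))
        (fun x hx => mem_biUnion hx (Metric.mem_ball_self (by linarith)))
    -- for each point of α = closure S, choose a nearby point of S
    have approx : ∀ x : α, ∃ y : α, (y : X) ∈ S ∧ dist x y < ε/3 := by
      intro x
      have hx : (x : X) ∈ closure S := x.2
      obtain ⟨y, hyS, hy⟩ := Metric.mem_closure_iff.1 hx (ε/3) (by linarith)
      exact ⟨⟨y, subset_closure hyS⟩, hyS, hy⟩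
    choose f hfS hfd using approx
    have htne : t.Nonempty := by
      rcases K.nonempty with ⟨x, hx⟩
      rcases mem_iUnion₂.1 (hcov hx) with ⟨y, hy, _⟩
      exact ⟨y, hy⟩
    -- the approximating compact set
    have hfinK' : (f '' t).Finite := (htfin.image f)
    have hK'ne : (f '' t).Nonempty := htne.image f
    set K' : NonemptyCompacts α := ⟨⟨f '' t, hfinK'.isCompact⟩, hK'ne⟩
    refine ⟨K', Metric.mem_ball.2 ?_, ?_⟩
    · rw [Metric.NonemptyCompacts.dist_eq]
      have hle : Metric.hausdorffDist (K' : Set α) (K : Set α) ≤ 2*ε/3 := by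
        apply Metric.hausdorffDist_le_of_mem_dist (by linarith)
        · rintro x ⟨y, hy, rfl⟩
          refine ⟨y, htK hy, ?_⟩
          rw [dist_comm]
          exact le_of_lt (lt_of_lt_of_le (hfd y) (by linarith))
        · intro x hx
          rcases mem_iUnion₂.1 (hcov hx) with ⟨y, hy, hxy⟩
          refine ⟨f y, ⟨y, hy, rfl⟩, ?_⟩
          calc dist x (f y) ≤ dist x y + dist y (f y) := dist_triangle _ _ _
            _ ≤ ε/3 + ε/3 := add_le_add (le_of_lt hxy) (le_of_lt (hfd y))
            _ ≤ 2*ε/3 := by linarith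
      calc Metric.hausdorffDist (K' : Set α) (K : Set α) ≤ 2*ε/3 := hle
        _ < ε := by linarith
    · rintro x ⟨y, _, rfl⟩
      exact hfS y
end

section
/- Let X be a non-empty perfect Polish space. For every n ∈ ℕ, every balanced scheme π of size n, and every non-empty open subset V of U(π) in the hyperspace K(X), there exists a balanced scheme π' of size n+1 consistent with π such that U(π') ⊆ V. -/
open Filter Set TopologicalSpace
open scoped Classical

/-- `ValidIdx a l`: the list `l` is a valid index tuple, i.e. its `k`-th entry lies in
`{0, …, a k − 1}` (representing `{1, …, a_{k+1}}` in the paper, zero-indexed). -/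
def ValidIdx (a : ℕ → ℕ) (l : List ℕ) : Prop :=
  ∀ k (hk : k < l.length), l.get ⟨k, hk⟩ < a k

/-- The distance `dist(A, B) = inf { d(x,y) : x ∈ A, y ∈ B }` of two sets. -/
noncomputable def SetDist {X : Type*} [MetricSpace X] (A B : Set X) : ℝ :=
  sInf (Set.image2 dist A B)

/-- The index function `Φ_{a}` determined by the fixed surjection `Ψ` (where `Ψ m` stands
for the value of `Ψ` at the odd number `2m+1`): `Φ(2m+1) = Ψ(2m+1)` if it is a non-empty
valid index tuple of level at most `2m+1`, and the tuple `(1) ∈ I₁` (here `[0]`,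
zero-indexed) otherwise. -/
noncomputable def PhiIdx (Ψ : ℕ → List ℕ) (a : ℕ → ℕ) (m : ℕ) : List ℕ :=
  if 1 ≤ (Ψ m).length ∧ (Ψ m).length ≤ 2 * m + 1 ∧ ValidIdx a (Ψ m) then Ψ m else [0]

/-- A balanced scheme of size `n` (size `0` is the empty scheme): branching numbers `a`
(meaningful for `k < 2n`), non-empty open sets `U l` for valid tuples `l` of level
`1 ≤ l.length ≤ 2n`, and constants `b` witnessing conditions (1)–(5) of the definition of
balanced schemes; condition (5) is governed by the index function `PhiIdx Ψ a`. -/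
def IsBalancedScheme {X : Type*} [MetricSpace X] (Ψ : ℕ → List ℕ) (n : ℕ)
    (a : ℕ → ℕ) (U : List ℕ → Set X) (b : ℕ → ℝ) : Prop :=
  (∀ k, k < 2 * n → 1 ≤ a k) ∧
  (1 ≤ n → 2 ≤ a 0) ∧
  (∀ k, 1 ≤ k → k < 2 * n → k * ∏ i ∈ Finset.range k, a i ≤ a k) ∧
  (∀ l, ValidIdx a l → 1 ≤ l.length → l.length ≤ 2 * n → (U l).Nonempty ∧ IsOpen (U l)) ∧
  (∀ l x, ValidIdx a (l ++ [x]) → 1 ≤ l.length → l.length + 1 ≤ 2 * n →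
    closure (U (l ++ [x])) ⊆ U l) ∧
  (∀ k, 1 ≤ k → k ≤ 2 * n → 0 < b k) ∧
  (∀ l, ValidIdx a l → 1 ≤ l.length → l.length ≤ 2 * n → Metric.diam (U l) ≤ b l.length) ∧
  (∀ l l', ValidIdx a l → ValidIdx a l' → 1 ≤ l.length → l.length = l'.length →
    l.length ≤ 2 * n → l ≠ l' → 2 * b l.length < SetDist (U l) (U l')) ∧
  (∀ m i j, 2 * m + 1 < 2 * n → ValidIdx a i → ValidIdx a j →
    i.length = 2 * m + 1 → j.length = 2 * m + 1 →
    U i ⊆ U (PhiIdx Ψ a m) → ¬ U j ⊆ U (PhiIdx Ψ a m) →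
    ∀ s t, s < a (2 * m + 1) → t < a (2 * m + 1) → s ≠ t →
      Metric.diam (⋃ u ∈ Finset.range (a (2 * m + 1)), U (j ++ [u])) <
        SetDist (U (i ++ [s])) (U (i ++ [t]))) 

/-- The open subset `𝒰(π) ⊆ K(X)` associated to a balanced scheme of size `n`: the
non-empty compact sets covered by the level-`2n` sets and meeting each of them.
For `n = 0` it is all of `K(X)`. -/
def SchemeSet {X : Type*} [MetricSpace X] (a : ℕ → ℕ) (U : List ℕ → Set X) (n : ℕ) :
    Set (NonemptyCompacts X) :=
  if n = 0 then Set.univ else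
    {K | (K : Set X) ⊆ (⋃ l ∈ {l : List ℕ | ValidIdx a l ∧ l.length = 2 * n}, U l) ∧
      ∀ l, ValidIdx a l → l.length = 2 * n → ((K : Set X) ∩ U l).Nonempty}

/-- A scheme of size `n + 1` with data `(a', U')` is consistent with a scheme of size `n`
with data `(a, U)` if the data agree on all levels `k ≤ 2n`. -/
def SchemeConsistent {X : Type*} [MetricSpace X] (n : ℕ) (a a' : ℕ → ℕ)
    (U U' : List ℕ → Set X) : Prop :=
  (∀ k, k < 2 * n → a' k = a k) ∧
    ∀ l : List ℕ, ValidIdx a l → 1 ≤ l.length → l.length ≤ 2 * n → U' l = U l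

/-!
Choose `K₀ ∈ 𝒱` with `B(K₀, ε) ⊆ 𝒱` and an `ε/4`-net of `K₀`; every net point lies in one of
the top-level sets `U_l`, `|l| = 2n`. Each `U_l` receives `A` children (at least as many as net
points) and each child `B` grandchildren, all of them small, well separated balls centred at
distinct points, which exist because `X` is perfect; the children of `U_l` are centred next to
the net points in `U_l`. Condition (5) at the new odd level is arranged by placing the
grandchildren of the children inside `U_Φ` first, at mutual distance at least `e`, and then
packing the grandchildren of every other child within `e/8` of it. Every new top-level set now
lies within `ε/4` of a net point, so a compact set covered by all of them and meeting each one is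
within Hausdorff distance `ε/2` of `K₀`.
-/

open Metric Topology

section Perfect

variable {X : Type*} [MetricSpace X] {ι : Type*}

theorem exists_injOn_forall_mem_sdiff [Nonempty X] (hperf : ∀ x : X, (𝓝[≠] x).NeBot)
    (F : Finset ι) {S : ι → Set X} (hS : ∀ i ∈ F, IsOpen (S i) ∧ (S i).Nonempty)
    (G : Finset X) : ∃ z : ι → X, Set.InjOn z F ∧ ∀ i ∈ F, z i ∈ S i ∧ z i ∉ G := by
  induction F using Finset.induction with
  | empty => exact ⟨fun _ => Classical.arbitrary X, by simp, by simp⟩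
  | @insert i F hi ih =>
    obtain ⟨z, hz_inj, hz⟩ := ih fun j hj => hS j (Finset.mem_insert_of_mem hj)
    obtain ⟨hSo, x, hx⟩ := hS i (Finset.mem_insert_self i F)
    have := hperf x
    obtain ⟨p, hpS, hp⟩ :=
      (infinite_of_mem_nhds x (hSo.mem_nhds hx)).exists_notMem_finset (G ∪ F.image z)
    have hz_eq : Set.EqOn (Function.update z i p) z F := fun j hj =>
      Function.update_of_ne (ne_of_mem_of_not_mem hj hi) _ _
    refine ⟨Function.update z i p, ?_, ?_⟩
    · rw [Finset.coe_insert, Set.injOn_insert (by simpa using hi)]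
      refine ⟨hz_inj.congr hz_eq.symm, ?_⟩
      rintro ⟨j, hj, hji⟩
      rw [Function.update_self, hz_eq hj] at hji
      exact hp (Finset.mem_union_right _ (hji ▸ Finset.mem_image_of_mem z hj))
    · intro j hj
      rcases Finset.mem_insert.1 hj with rfl | hj
      · simpa [Function.update_self] using ⟨hpS, fun h => hp (Finset.mem_union_left _ h)⟩
      · rw [hz_eq hj]
        exact hz j hj

theorem eventually_forall_mul_lt_dist (F : Finset ι) {z : ι → X} (hz : Set.InjOn z F)
    (c : ℝ) : ∀ᶠ r in 𝓝 (0 : ℝ), ∀ i ∈ F, ∀ j ∈ F, i ≠ j → c * r < dist (z i) (z j) := by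
  have hc : Tendsto (fun r : ℝ => c * r) (𝓝 0) (𝓝 0) := by
    simpa using (tendsto_id (x := 𝓝 (0 : ℝ))).const_mul c
  refine (eventually_all_finset F).2 fun i hi => (eventually_all_finset F).2 fun j hj => ?_
  by_cases hij : i = j
  · exact Eventually.of_forall fun _ h => absurd hij h
  · exact (hc.eventually (eventually_lt_nhds (dist_pos.2 fun h => hij (hz hi hj h)))).mono
      fun _ h _ => h

theorem exists_separated_or_clustered_points [Nonempty X] (hperf : ∀ x : X, (𝓝[≠] x).NeBot)
    (F : Finset ι) (c : ι → X) {ρ : ℝ} (hρ : 0 < ρ) (P : ι → Prop) :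
    ∃ w : ι → X, ∃ e > 0, Set.InjOn w F ∧ (∀ i ∈ F, dist (w i) (c i) < ρ) ∧
      (∀ i ∈ F, ∀ j ∈ F, P i → P j → i ≠ j → e ≤ dist (w i) (w j)) ∧
      ∀ i ∈ F, ¬ P i → dist (w i) (c i) < e / 8 := by
  obtain ⟨w₁, hw₁_inj, hw₁⟩ := exists_injOn_forall_mem_sdiff hperf (F.filter P)
    (S := fun i => ball (c i) ρ) (fun _ _ => ⟨isOpen_ball, nonempty_ball.2 hρ⟩) ∅
  obtain ⟨e, he, hw₁_sep⟩ := (eventually_forall_mul_lt_dist _ hw₁_inj 1).exists_gt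
  obtain ⟨w₂, hw₂_inj, hw₂⟩ := exists_injOn_forall_mem_sdiff hperf (F.filter (¬ P ·))
    (S := fun i => ball (c i) (min ρ (e / 8)))
    (fun _ _ => ⟨isOpen_ball, nonempty_ball.2 (by positivity)⟩) ((F.filter P).image w₁)
  have hF₁ : ∀ {i}, i ∈ F → P i → i ∈ F.filter P := fun hi hPi => Finset.mem_filter.2 ⟨hi, hPi⟩
  have hF₂ : ∀ {i}, i ∈ F → ¬ P i → i ∈ F.filter (¬ P ·) := fun hi hPi =>
    Finset.mem_filter.2 ⟨hi, hPi⟩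
  refine ⟨fun i => if P i then w₁ i else w₂ i, e, he, ?_, fun i hi => ?_,
    fun i hi j hj hPi hPj hij => ?_, fun i hi hPi => ?_⟩
  · intro i hi j hj hij
    by_cases hPi : P i <;> by_cases hPj : P j <;> simp only [hPi, hPj, if_true, if_false] at hij
    · exact hw₁_inj (hF₁ hi hPi) (hF₁ hj hPj) hij
    · exact ((hw₂ j (hF₂ hj hPj)).2 (hij ▸ Finset.mem_image_of_mem w₁ (hF₁ hi hPi))).elim
    · exact ((hw₂ i (hF₂ hi hPi)).2 (hij.symm ▸ Finset.mem_image_of_mem w₁ (hF₁ hj hPj))).elim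
    · exact hw₂_inj (hF₂ hi hPi) (hF₂ hj hPj) hij
  · by_cases hPi : P i
    · simpa [hPi] using (hw₁ i (hF₁ hi hPi)).1
    · simpa [hPi] using (hw₂ i (hF₂ hi hPi)).1.trans_le (min_le_left _ _)
  · simpa [hPi, hPj] using (hw₁_sep i (hF₁ hi hPi) j (hF₁ hj hPj) hij).le
  · simpa [hPi] using (hw₂ i (hF₂ hi hPi)).1.trans_le (min_le_right _ _)

theorem exists_separated_closedBalls [Nonempty X] (hperf : ∀ x : X, (𝓝[≠] x).NeBot)
    (F : Finset ι) {S : ι → Set X} (hS : ∀ i ∈ F, IsOpen (S i) ∧ (S i).Nonempty) (c : ℝ) :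
    ∃ (z : ι → X) (r : ℝ), 0 < r ∧ (∀ i ∈ F, closedBall (z i) r ⊆ S i) ∧
      ∀ i ∈ F, ∀ j ∈ F, i ≠ j → c * r < dist (z i) (z j) := by
  obtain ⟨z, hz_inj, hz⟩ := exists_injOn_forall_mem_sdiff hperf F hS ∅
  obtain ⟨r, hr, hsub, hsep⟩ := (((eventually_all_finset F).2 fun i hi =>
    eventually_closedBall_subset ((hS i hi).1.mem_nhds (hz i hi).1)).and
      (eventually_forall_mul_lt_dist F hz_inj c)).exists_gt
  exact ⟨z, r, hr, hsub, hsep⟩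

end Perfect

theorem validIdx_nil (a : ℕ → ℕ) : ValidIdx a [] := fun _ hk => absurd hk (Nat.not_lt_zero _)

theorem validIdx_append_singleton {a : ℕ → ℕ} {l : List ℕ} {x : ℕ} :
    ValidIdx a (l ++ [x]) ↔ ValidIdx a l ∧ x < a l.length := by
  constructor
  · intro h
    refine ⟨fun k hk => ?_, by simpa using h l.length (by simp)⟩
    simpa [List.getElem_append_left hk] using h k (by simp; omega)
  · rintro ⟨hl, hx⟩ k hk
    simp only [List.length_append, List.length_singleton] at hk
    rcases Nat.lt_or_ge k l.length with hkl | hkl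
    · simpa [List.getElem_append_left hkl] using hl k hkl
    · obtain rfl : k = l.length := by omega
      simpa using hx

def validTuples (a : ℕ → ℕ) : ℕ → Finset (List ℕ)
  | 0 => {[]}
  | m + 1 => (validTuples a m ×ˢ Finset.range (a m)).image fun p => p.1 ++ [p.2]

theorem mem_validTuples_succ {a : ℕ → ℕ} {m : ℕ} {q : List ℕ} :
    q ∈ validTuples a (m + 1) ↔ ∃ l ∈ validTuples a m, ∃ x < a m, q = l ++ [x] := by
  simp [validTuples, eq_comm, and_assoc]

theorem append_mem_validTuples {a : ℕ → ℕ} {m : ℕ} {l : List ℕ} {x : ℕ}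
    (hl : l ∈ validTuples a m) (hx : x < a m) : l ++ [x] ∈ validTuples a (m + 1) :=
  mem_validTuples_succ.2 ⟨l, hl, x, hx, rfl⟩

theorem mem_validTuples {a : ℕ → ℕ} {m : ℕ} {l : List ℕ} :
    l ∈ validTuples a m ↔ ValidIdx a l ∧ l.length = m := by
  induction m generalizing l with
  | zero =>
    simp only [validTuples, Finset.mem_singleton, List.length_eq_zero_iff]
    exact ⟨fun h => ⟨h ▸ validIdx_nil a, h⟩, And.right⟩
  | succ m ih =>
    rw [mem_validTuples_succ]
    constructor
    · rintro ⟨l, hl, x, hx, rfl⟩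
      rw [ih] at hl
      exact ⟨validIdx_append_singleton.2 ⟨hl.1, hl.2 ▸ hx⟩, by simp [hl.2]⟩
    · rintro ⟨hv, hlen⟩
      obtain rfl | ⟨l, x, rfl⟩ := l.eq_nil_or_concat'
      · simp at hlen
      rw [validIdx_append_singleton] at hv
      have hl : l.length = m := by simpa using hlen
      exact ⟨l, ih.2 ⟨hv.1, hl⟩, x, hl ▸ hv.2, rfl⟩

section Extension

variable {X : Type*} [MetricSpace X]

def extendSeq {β : Type*} (f : ℕ → β) (m : ℕ) (x : β) (k : ℕ) : β :=
  if k < m then f k else x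

theorem extendSeq_of_lt {β : Type*} {f : ℕ → β} {m k : ℕ} {x : β} (h : k < m) :
    extendSeq f m x k = f k := if_pos h

theorem extendSeq_of_le {β : Type*} {f : ℕ → β} {m k : ℕ} {x : β} (h : m ≤ k) :
    extendSeq f m x k = x := if_neg (Nat.not_lt.2 h)

theorem prod_range_extendSeq {M : Type*} [CommMonoid M] {f : ℕ → M} {m k : ℕ} {x : M}
    (h : k ≤ m) :
    (Finset.range k).prod (extendSeq f m x) = (Finset.range k).prod f :=
  Finset.prod_congr rfl fun _ hi => extendSeq_of_lt ((Finset.mem_range.1 hi).trans_le h)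

theorem validIdx_extendSeq_iff {a : ℕ → ℕ} {m x : ℕ} {l : List ℕ} (h : l.length ≤ m) :
    ValidIdx (extendSeq a m x) l ↔ ValidIdx a l :=
  forall_congr' fun k => forall_congr' fun hk => by rw [extendSeq_of_lt (hk.trans_le h)]

theorem validTuples_extendSeq {a : ℕ → ℕ} {m x k : ℕ} (h : k ≤ m) :
    validTuples (extendSeq a m x) k = validTuples a k := by
  ext l
  simp only [mem_validTuples]
  exact and_congr_left fun hl => validIdx_extendSeq_iff (hl ▸ h)

theorem mem_validTuples_extendSeq_succ {a : ℕ → ℕ} {m x : ℕ} {q : List ℕ} :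
    q ∈ validTuples (extendSeq a m x) (m + 1) ↔ ∃ l ∈ validTuples a m, ∃ k < x, q = l ++ [k] := by
  rw [mem_validTuples_succ, validTuples_extendSeq le_rfl, extendSeq_of_le le_rfl]

def extendSets (U : List ℕ → Set X) (m : ℕ) (c : List ℕ → X) (r : ℝ) (l : List ℕ) : Set X :=
  if l.length ≤ m then U l else ball (c l) r

theorem extendSets_of_length_le {U : List ℕ → Set X} {m : ℕ} {c : List ℕ → X} {r : ℝ}
    {l : List ℕ} (h : l.length ≤ m) : extendSets U m c r l = U l := if_pos h

theorem extendSets_of_lt_length {U : List ℕ → Set X} {m : ℕ} {c : List ℕ → X} {r : ℝ}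
    {l : List ℕ} (h : m < l.length) : extendSets U m c r l = ball (c l) r :=
  if_neg (Nat.not_le.2 h)

end Extension

section Scheme

variable {X : Type*} [MetricSpace X]

theorem le_setDist {A B : Set X} {c : ℝ} (hA : A.Nonempty) (hB : B.Nonempty)
    (h : ∀ x ∈ A, ∀ y ∈ B, c ≤ dist x y) : c ≤ SetDist A B :=
  le_csInf (hA.image2 hB) fun _ ⟨x, hx, y, hy, hxy⟩ => hxy ▸ h x hx y hy

theorem sub_le_setDist_ball {x y : X} {r : ℝ} (hr : 0 < r) :
    dist x y - 2 * r ≤ SetDist (ball x r) (ball y r) :=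
  le_setDist (nonempty_ball.2 hr) (nonempty_ball.2 hr) fun x' hx' y' hy' => by
    linarith [dist_triangle4 x x' y' y, dist_comm x x', mem_ball.1 hx', mem_ball.1 hy']

/-- Conditions (1)–(4) of a balanced scheme for the levels `k ≤ m`, except `2 ≤ a₁`. -/
def IsSchemeUpTo (a : ℕ → ℕ) (U : List ℕ → Set X) (b : ℕ → ℝ) (m : ℕ) : Prop :=
  (∀ k, k < m → 1 ≤ a k) ∧
  (∀ k, 1 ≤ k → k < m → k * ∏ i ∈ Finset.range k, a i ≤ a k) ∧
  (∀ l, ValidIdx a l → 1 ≤ l.length → l.length ≤ m → (U l).Nonempty ∧ IsOpen (U l)) ∧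
  (∀ l x, ValidIdx a (l ++ [x]) → 1 ≤ l.length → l.length + 1 ≤ m →
    closure (U (l ++ [x])) ⊆ U l) ∧
  (∀ k, 1 ≤ k → k ≤ m → 0 < b k) ∧
  (∀ l, ValidIdx a l → 1 ≤ l.length → l.length ≤ m → diam (U l) ≤ b l.length) ∧
  (∀ l l', ValidIdx a l → ValidIdx a l' → 1 ≤ l.length → l.length = l'.length →
    l.length ≤ m → l ≠ l' → 2 * b l.length < SetDist (U l) (U l'))

/-- Condition (5) of a balanced scheme at the odd level `2m+1`. -/
def BalancedAt (Ψ : ℕ → List ℕ) (a : ℕ → ℕ) (U : List ℕ → Set X) (m : ℕ) : Prop :=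
  ∀ i j, ValidIdx a i → ValidIdx a j → i.length = 2 * m + 1 → j.length = 2 * m + 1 →
    U i ⊆ U (PhiIdx Ψ a m) → ¬ U j ⊆ U (PhiIdx Ψ a m) →
    ∀ s t, s < a (2 * m + 1) → t < a (2 * m + 1) → s ≠ t →
      diam (⋃ u ∈ Finset.range (a (2 * m + 1)), U (j ++ [u])) <
        SetDist (U (i ++ [s])) (U (i ++ [t]))

theorem isBalancedScheme_iff {Ψ : ℕ → List ℕ} {n : ℕ} {a : ℕ → ℕ} {U : List ℕ → Set X}
    {b : ℕ → ℝ} : IsBalancedScheme Ψ n a U b ↔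
      IsSchemeUpTo a U b (2 * n) ∧ (1 ≤ n → 2 ≤ a 0) ∧
        ∀ m, 2 * m + 1 < 2 * n → BalancedAt Ψ a U m := by
  constructor
  · rintro ⟨h1, h2, h3, h4, h5, h6, h7, h8, h9⟩
    exact ⟨⟨h1, h3, h4, h5, h6, h7, h8⟩, h2, fun m hm i j => h9 m i j hm⟩
  · rintro ⟨⟨h1, h3, h4, h5, h6, h7, h8⟩, h2, h9⟩
    exact ⟨h1, h2, h3, h4, h5, h6, h7, h8, fun m i j hm => h9 m hm i j⟩

theorem extendSeq_branching {a : ℕ → ℕ} {m x : ℕ} (h1 : ∀ k, k < m → 1 ≤ a k)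
    (h3 : ∀ k, 1 ≤ k → k < m → k * ∏ i ∈ Finset.range k, a i ≤ a k) (hx₁ : 1 ≤ x)
    (hx : m * ∏ i ∈ Finset.range m, a i ≤ x) :
    (∀ k, k < m + 1 → 1 ≤ extendSeq a m x k) ∧
      ∀ k, 1 ≤ k → k < m + 1 →
        k * ∏ i ∈ Finset.range k, extendSeq a m x i ≤ extendSeq a m x k := by
  refine ⟨fun k _ => ?_, fun k hk₁ hk => ?_⟩
  · rcases Nat.lt_or_ge k m with hkm | hkm
    · exact (extendSeq_of_lt hkm).symm ▸ h1 k hkm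
    · exact (extendSeq_of_le hkm).symm ▸ hx₁
  · rw [prod_range_extendSeq (Nat.le_of_lt_succ hk)]
    rcases Nat.lt_or_ge k m with hkm | hkm
    · exact (extendSeq_of_lt hkm).symm ▸ h3 k hk₁ hkm
    · obtain rfl : k = m := by omega
      exact (extendSeq_of_le le_rfl).symm ▸ hx

theorem IsSchemeUpTo.extend {a : ℕ → ℕ} {U : List ℕ → Set X} {b : ℕ → ℝ} {m x : ℕ}
    {c : List ℕ → X} {r : ℝ} (h : IsSchemeUpTo a U b m) (hx₁ : 1 ≤ x)
    (hx : m * ∏ i ∈ Finset.range m, a i ≤ x) (hr : 0 < r)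
    (hsub : ∀ q ∈ validTuples (extendSeq a m x) (m + 1), 1 ≤ m →
      closedBall (c q) r ⊆ U q.dropLast)
    (hsep : ∀ q ∈ validTuples (extendSeq a m x) (m + 1),
      ∀ q' ∈ validTuples (extendSeq a m x) (m + 1), q ≠ q' → 6 * r < dist (c q) (c q')) :
    IsSchemeUpTo (extendSeq a m x) (extendSets U m c r) (extendSeq b (m + 1) (2 * r))
      (m + 1) := by
  obtain ⟨h1, h3, h4, h5, h6, h7, h8⟩ := h
  have hval : ∀ {l : List ℕ}, l.length ≤ m → (ValidIdx (extendSeq a m x) l ↔ ValidIdx a l) :=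
    validIdx_extendSeq_iff
  refine ⟨(extendSeq_branching h1 h3 hx₁ hx).1, (extendSeq_branching h1 h3 hx₁ hx).2,
    fun l hl hl₁ hlm => ?_, fun l y hl hl₁ hlm => ?_, fun k hk₁ hk => ?_, fun l hl hl₁ hlm => ?_,
    fun l l' hl hl' hl₁ hll' hlm hne => ?_⟩
  · rcases Nat.lt_or_ge m l.length with hml | hlm'
    · rw [extendSets_of_lt_length hml]
      exact ⟨nonempty_ball.2 hr, isOpen_ball⟩
    · rw [extendSets_of_length_le hlm']
      exact h4 l ((hval hlm').1 hl) hl₁ hlm'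
  · have hlen : (l ++ [y]).length = l.length + 1 := List.length_append ..
    rw [extendSets_of_length_le (by omega : l.length ≤ m)]
    rcases Nat.lt_or_ge m (l ++ [y]).length with hml | hlm'
    · rw [extendSets_of_lt_length hml]
      have hq : l ++ [y] ∈ validTuples (extendSeq a m x) (m + 1) :=
        mem_validTuples.2 ⟨hl, by omega⟩
      have := hsub _ hq (by omega)
      rw [List.dropLast_concat] at this
      exact closure_ball_subset_closedBall.trans this
    · rw [extendSets_of_length_le hlm']
      exact h5 l y ((hval hlm').1 hl) hl₁ (by omega)
  · rcases Nat.lt_or_ge k (m + 1) with hkm | hkm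
    · exact (extendSeq_of_lt hkm).symm ▸ h6 k hk₁ (by omega)
    · exact (extendSeq_of_le hkm).symm ▸ by positivity
  · rcases Nat.lt_or_ge m l.length with hml | hlm'
    · rw [extendSets_of_lt_length hml, extendSeq_of_le hml]
      exact diam_ball hr.le
    · rw [extendSets_of_length_le hlm', extendSeq_of_lt (Nat.lt_succ_of_le hlm')]
      exact h7 l ((hval hlm').1 hl) hl₁ hlm'
  · rcases Nat.lt_or_ge m l.length with hml | hlm'
    · rw [extendSets_of_lt_length hml, extendSets_of_lt_length (hll' ▸ hml), extendSeq_of_le hml]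
      have hq : l ∈ validTuples (extendSeq a m x) (m + 1) := mem_validTuples.2 ⟨hl, by omega⟩
      have hq' : l' ∈ validTuples (extendSeq a m x) (m + 1) := mem_validTuples.2 ⟨hl', by omega⟩
      linarith [hsep l hq l' hq' hne, sub_le_setDist_ball (x := c l) (y := c l') hr]
    · rw [extendSets_of_length_le hlm', extendSets_of_length_le (hll' ▸ hlm'),
        extendSeq_of_lt (Nat.lt_succ_of_le hlm')]
      exact h8 l l' ((hval hlm').1 hl) ((hval (hll' ▸ hlm')).1 hl') hl₁ hll' hlm' hne

end Scheme

section Balance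

variable {X : Type*} [MetricSpace X] {Ψ : ℕ → List ℕ}

theorem length_phiIdx_le (a : ℕ → ℕ) (m : ℕ) : (PhiIdx Ψ a m).length ≤ 2 * m + 1 := by
  unfold PhiIdx
  split_ifs with h
  · exact h.2.1
  · simp

theorem phiIdx_extendSeq {a : ℕ → ℕ} {m M x : ℕ} (hM : 2 * m + 1 ≤ M) :
    PhiIdx Ψ (extendSeq a M x) m = PhiIdx Ψ a m := by
  unfold PhiIdx
  refine if_congr (and_congr_right fun _ => and_congr_right fun h => ?_) rfl rfl
  exact validIdx_extendSeq_iff (h.trans hM)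

theorem BalancedAt.extend {a : ℕ → ℕ} {U : List ℕ → Set X} {m M x : ℕ} {c : List ℕ → X}
    {r : ℝ} (h : BalancedAt Ψ a U m) (hM : 2 * m + 2 ≤ M) :
    BalancedAt Ψ (extendSeq a M x) (extendSets U M c r) m := by
  intro i j hi hj hli hlj hsi hsj s t hs ht hst
  have hU : ∀ {l : List ℕ}, l.length ≤ 2 * m + 2 → extendSets U M c r l = U l :=
    fun hl => extendSets_of_length_le (hl.trans hM)
  have hchild : ∀ {l : List ℕ} {u : ℕ}, l.length = 2 * m + 1 → (l ++ [u]).length ≤ 2 * m + 2 :=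
    fun hl => by simp [hl]
  have hΦ : extendSets U M c r (PhiIdx Ψ (extendSeq a M x) m) = U (PhiIdx Ψ a m) := by
    rw [phiIdx_extendSeq (by omega), hU (by linarith [length_phiIdx_le (Ψ := Ψ) a m])]
  rw [extendSeq_of_lt (by omega)] at hs ht ⊢
  rw [hU (hchild hli), hU (hchild hli), Set.iUnion₂_congr fun u _ => hU (hchild hlj)]
  rw [hU (by omega), hΦ] at hsi hsj
  exact h i j ((validIdx_extendSeq_iff (by omega)).1 hi) ((validIdx_extendSeq_iff (by omega)).1 hj)
    hli hlj hsi hsj s t hs ht hst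

theorem balancedAt_extendSets {a : ℕ → ℕ} {U : List ℕ → Set X} {m : ℕ} {c w : List ℕ → X}
    {r e : ℝ} (hr : 0 < r) (hre : 16 * r < e)
    (hin : ∀ q ∈ validTuples a (2 * m + 2), ∀ q' ∈ validTuples a (2 * m + 2),
      U q.dropLast ⊆ U (PhiIdx Ψ a m) → U q'.dropLast ⊆ U (PhiIdx Ψ a m) → q ≠ q' →
        e ≤ dist (w q) (w q'))
    (hout : ∀ q ∈ validTuples a (2 * m + 2), ¬ U q.dropLast ⊆ U (PhiIdx Ψ a m) →
      dist (w q) (c q.dropLast) < e / 8) :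
    BalancedAt Ψ a (extendSets U (2 * m + 1) w r) m := by
  intro i j hi hj hli hlj hsi hsj s t hs ht hst
  have hchild : ∀ {l : List ℕ} {u : ℕ}, ValidIdx a l → l.length = 2 * m + 1 → u < a (2 * m + 1) →
      l ++ [u] ∈ validTuples a (2 * m + 2) ∧ extendSets U (2 * m + 1) w r (l ++ [u]) =
        ball (w (l ++ [u])) r := fun hl hll hu =>
    ⟨append_mem_validTuples (mem_validTuples.2 ⟨hl, hll⟩) hu,
      extendSets_of_lt_length (by simp [hll])⟩
  rw [extendSets_of_length_le hli.le, extendSets_of_length_le (length_phiIdx_le a m)] at hsi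
  rw [extendSets_of_length_le hlj.le, extendSets_of_length_le (length_phiIdx_le a m)] at hsj
  have hdiam : diam (⋃ u ∈ Finset.range (a (2 * m + 1)),
      extendSets U (2 * m + 1) w r (j ++ [u])) ≤ 2 * (e / 8 + r) := by
    refine (diam_mono ?_ (isBounded_ball (x := c j))).trans (diam_ball (by linarith))
    refine Set.iUnion₂_subset fun u hu => ?_
    obtain ⟨hq, hU⟩ := hchild hj hlj (Finset.mem_range.1 hu)
    have hw := hout _ hq (by rwa [List.dropLast_concat])
    rw [List.dropLast_concat] at hw
    rw [hU]
    exact ball_subset_ball' (by linarith)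
  obtain ⟨hqs, hUs⟩ := hchild hi hli hs
  obtain ⟨hqt, hUt⟩ := hchild hi hli ht
  have hsep := hin _ hqs _ hqt (by rwa [List.dropLast_concat]) (by rwa [List.dropLast_concat])
    (by simpa using hst)
  rw [hUs, hUt]
  linarith [sub_le_setDist_ball (x := w (i ++ [s])) (y := w (i ++ [t])) hr]

end Balance

section Refinement

variable {X : Type*} [MetricSpace X] {Ψ : ℕ → List ℕ} {n : ℕ} {a : ℕ → ℕ}
  {U : List ℕ → Set X} {b : ℕ → ℝ}

theorem IsBalancedScheme.extend {A B : ℕ} {z w : List ℕ → X} {r₁ r₂ : ℝ}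
    (hπ : IsBalancedScheme Ψ n a U b) (hA₂ : 2 ≤ A)
    (hA : 2 * n * ∏ k ∈ Finset.range (2 * n), a k ≤ A)
    (hB : (2 * n + 1) * ∏ k ∈ Finset.range (2 * n + 1), extendSeq a (2 * n) A k ≤ B)
    (hr₁ : 0 < r₁)
    (hz_sub : ∀ q ∈ validTuples (extendSeq a (2 * n) A) (2 * n + 1), 1 ≤ 2 * n →
      closedBall (z q) r₁ ⊆ U q.dropLast)
    (hz_sep : ∀ q ∈ validTuples (extendSeq a (2 * n) A) (2 * n + 1),
      ∀ q' ∈ validTuples (extendSeq a (2 * n) A) (2 * n + 1), q ≠ q' → 6 * r₁ < dist (z q) (z q'))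
    (hr₂ : 0 < r₂)
    (hw_sub : ∀ q ∈ validTuples (extendSeq (extendSeq a (2 * n) A) (2 * n + 1) B) (2 * n + 2),
      closedBall (w q) r₂ ⊆ ball (z q.dropLast) r₁)
    (hw_sep : ∀ q ∈ validTuples (extendSeq (extendSeq a (2 * n) A) (2 * n + 1) B) (2 * n + 2),
      ∀ q' ∈ validTuples (extendSeq (extendSeq a (2 * n) A) (2 * n + 1) B) (2 * n + 2),
        q ≠ q' → 6 * r₂ < dist (w q) (w q'))
    (hbal : BalancedAt Ψ (extendSeq (extendSeq a (2 * n) A) (2 * n + 1) B)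
      (extendSets (extendSets U (2 * n) z r₁) (2 * n + 1) w r₂) n) :
    IsBalancedScheme Ψ (n + 1) (extendSeq (extendSeq a (2 * n) A) (2 * n + 1) B)
      (extendSets (extendSets U (2 * n) z r₁) (2 * n + 1) w r₂)
      (extendSeq (extendSeq b (2 * n + 1) (2 * r₁)) (2 * n + 2) (2 * r₂)) := by
  obtain ⟨hS, ha₀, hbal_old⟩ := isBalancedScheme_iff.1 hπ
  have hS₁ := hS.extend (by omega) hA hr₁ hz_sub hz_sep
  have hB₁ : 1 ≤ B := (Nat.mul_pos (Nat.succ_pos _)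
    (Finset.prod_pos fun k hk => hS₁.1 k (Finset.mem_range.1 hk))).trans_le hB
  have hS₂ := hS₁.extend hB₁ hB hr₂ (fun q hq _ => by
    rw [extendSets_of_lt_length (by simp [(mem_validTuples.1 hq).2])]
    exact hw_sub q hq) hw_sep
  refine isBalancedScheme_iff.2 ⟨hS₂, fun _ => ?_, fun m hm => ?_⟩
  · rw [extendSeq_of_lt (by omega)]
    rcases Nat.eq_zero_or_pos n with rfl | hn
    · exact (extendSeq_of_le le_rfl).symm ▸ hA₂
    · exact (extendSeq_of_lt (by omega : 0 < 2 * n)).symm ▸ ha₀ hn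
  · rcases Nat.lt_or_ge m n with hmn | hmn
    · exact ((hbal_old m (by omega)).extend (by omega)).extend (by omega)
    · obtain rfl : m = n := by omega
      exact hbal

theorem schemeConsistent_extend {A : ℕ} (B : ℕ) (z w : List ℕ → X) (r₁ r₂ : ℝ) :
    SchemeConsistent n a (extendSeq (extendSeq a (2 * n) A) (2 * n + 1) B) U
      (extendSets (extendSets U (2 * n) z r₁) (2 * n + 1) w r₂) :=
  ⟨fun _ hk => (extendSeq_of_lt (by omega)).trans (extendSeq_of_lt hk),
    fun _ _ _ hl => (extendSets_of_length_le (by omega)).trans (extendSets_of_length_le hl)⟩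

end Refinement

/-- The sets of the top level `2n` of a scheme of size `n`; the scheme of size `0` has the
single top-level set `X`. -/
def topLevelSet {X : Type*} (U : List ℕ → Set X) (n : ℕ) (l : List ℕ) : Set X :=
  if n = 0 then Set.univ else U l

theorem topLevelSet_of_ne_zero {X : Type*} {U : List ℕ → Set X} {n : ℕ} (hn : n ≠ 0)
    (l : List ℕ) : topLevelSet U n l = U l :=
  if_neg hn

section Hyperspace

variable {X : Type*} [MetricSpace X] {a : ℕ → ℕ} {U : List ℕ → Set X} {n : ℕ}

theorem IsBalancedScheme.isOpen_topLevelSet {Ψ : ℕ → List ℕ} {b : ℕ → ℝ}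
    (hπ : IsBalancedScheme Ψ n a U b) {l : List ℕ} (hl : l ∈ validTuples a (2 * n)) :
    IsOpen (topLevelSet U n l) := by
  unfold topLevelSet
  split_ifs with hn
  · exact isOpen_univ
  · obtain ⟨hv, hlen⟩ := mem_validTuples.1 hl
    exact (hπ.2.2.2.1 l hv (by omega) hlen.le).2

theorem subset_iUnion_topLevelSet_of_mem_schemeSet {K : NonemptyCompacts X}
    (hK : K ∈ SchemeSet a U n) : (K : Set X) ⊆ ⋃ l ∈ validTuples a (2 * n), topLevelSet U n l := by
  unfold SchemeSet at hK
  unfold topLevelSet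
  split_ifs at hK ⊢ with hn
  · subst hn
    exact fun _ _ => Set.mem_biUnion (x := []) (by simp [validTuples]) (Set.mem_univ _)
  · refine hK.1.trans (Set.iUnion₂_subset fun l hl => ?_)
    exact Set.subset_biUnion_of_mem (u := U) (mem_validTuples.2 hl)

theorem inter_topLevelSet_nonempty_of_mem_schemeSet {K : NonemptyCompacts X}
    (hK : K ∈ SchemeSet a U n) {l : List ℕ} (hl : l ∈ validTuples a (2 * n)) :
    ((K : Set X) ∩ topLevelSet U n l).Nonempty := by
  unfold SchemeSet at hK
  unfold topLevelSet
  split_ifs at hK ⊢ with hn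
  · simpa using K.nonempty
  · exact hK.2 l (mem_validTuples.1 hl).1 (mem_validTuples.1 hl).2

theorem dist_le_of_mem_schemeSet (hn : n ≠ 0) {K K₀ : NonemptyCompacts X}
    (hK : K ∈ SchemeSet a U n) {δ : ℝ} (hδ : 0 ≤ δ)
    (hfar : ∀ l ∈ validTuples a (2 * n), ∀ x ∈ U l, ∃ y ∈ K₀, dist x y ≤ δ)
    (hnear : ∀ y ∈ K₀, ∃ l ∈ validTuples a (2 * n), ∀ x ∈ U l, dist y x ≤ δ) :
    dist K K₀ ≤ δ := by
  rw [SchemeSet, if_neg hn] at hK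
  rw [NonemptyCompacts.dist_eq]
  refine hausdorffDist_le_of_mem_dist hδ (fun x hx => ?_) fun y hy => ?_
  · obtain ⟨l, hl, hxl⟩ := Set.mem_iUnion₂.1 (hK.1 hx)
    exact hfar l (mem_validTuples.2 hl) x hxl
  · obtain ⟨l, hl, hyl⟩ := hnear y hy
    obtain ⟨x, hxK, hxl⟩ := hK.2 l (mem_validTuples.1 hl).1 (mem_validTuples.1 hl).2
    exact ⟨x, hxK, hyl x hxl⟩

end Hyperspace

theorem IsCompact.exists_net_in_cover {X : Type*} [MetricSpace X] [Nonempty X] {K : Set X}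
    (hK : IsCompact K) {ι : Type*} {L : Finset ι} {W : ι → Set X} (hcov : K ⊆ ⋃ i ∈ L, W i)
    (hmeet : ∀ i ∈ L, (K ∩ W i).Nonempty) {δ : ℝ} (hδ : 0 < δ) :
    ∃ N, ∃ y : ι → ℕ → X, (∀ i ∈ L, ∀ k, y i k ∈ K ∩ W i) ∧
      ∀ x ∈ K, ∃ i ∈ L, ∃ k < N, dist x (y i k) < δ := by
  obtain ⟨t, htK, hcover⟩ := hK.elim_nhds_subcover (fun x => ball x δ) fun x _ => ball_mem_nhds x hδ
  choose! p hp using hmeet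
  refine ⟨t.toList.length,
    fun i k => if t.toList.getD k (p i) ∈ W i then t.toList.getD k (p i) else p i, ?_, ?_⟩
  · intro i hi k
    have hK : t.toList.getD k (p i) ∈ K := by
      rcases Nat.lt_or_ge k t.toList.length with hk | hk
      · rw [List.getD_eq_getElem _ _ hk]
        exact htK _ (Finset.mem_toList.1 (List.getElem_mem hk))
      · rw [List.getD_eq_default _ _ hk]
        exact (hp i hi).1
    dsimp only
    split_ifs with hW
    · exact ⟨hK, hW⟩
    · exact hp i hi
  · intro x hx
    obtain ⟨s, hs, hxs⟩ := Set.mem_iUnion₂.1 (hcover hx)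
    obtain ⟨i, hi, hsi⟩ := Set.mem_iUnion₂.1 (hcov (htK s hs))
    obtain ⟨k, hk, rfl⟩ := List.mem_iff_getElem.1 (Finset.mem_toList.2 hs)
    refine ⟨i, hi, k, hk, ?_⟩
    dsimp only
    rw [List.getD_eq_getElem _ _ hk, if_pos hsi]
    exact hxs

section Construction

variable {X : Type*} [MetricSpace X] [Nonempty X] {Ψ : ℕ → List ℕ} {n : ℕ} {a : ℕ → ℕ}
  {U : List ℕ → Set X} {b : ℕ → ℝ} {A : ℕ}

theorem IsBalancedScheme.exists_extension (hperf : ∀ x : X, (𝓝[≠] x).NeBot)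
    (hπ : IsBalancedScheme Ψ n a U b) (hA₂ : 2 ≤ A)
    (hA : 2 * n * ∏ k ∈ Finset.range (2 * n), a k ≤ A) {z : List ℕ → X} {r₁ : ℝ} (hr₁ : 0 < r₁)
    (hz_sub : ∀ q ∈ validTuples (extendSeq a (2 * n) A) (2 * n + 1),
      closedBall (z q) r₁ ⊆ topLevelSet U n q.dropLast)
    (hz_sep : ∀ q ∈ validTuples (extendSeq a (2 * n) A) (2 * n + 1),
      ∀ q' ∈ validTuples (extendSeq a (2 * n) A) (2 * n + 1), q ≠ q' → 6 * r₁ < dist (z q) (z q')) :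
    ∃ (B : ℕ) (w : List ℕ → X) (r₂ : ℝ), 0 < B ∧
      IsBalancedScheme Ψ (n + 1) (extendSeq (extendSeq a (2 * n) A) (2 * n + 1) B)
        (extendSets (extendSets U (2 * n) z r₁) (2 * n + 1) w r₂)
        (extendSeq (extendSeq b (2 * n + 1) (2 * r₁)) (2 * n + 2) (2 * r₂)) ∧
      ∀ p ∈ validTuples (extendSeq a (2 * n) A) (2 * n + 1), ∀ u < B,
        extendSets (extendSets U (2 * n) z r₁) (2 * n + 1) w r₂ (p ++ [u]) ⊆ ball (z p) r₁ := by
  set a₁ := extendSeq a (2 * n) A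
  set B := (2 * n + 1) * ∏ k ∈ Finset.range (2 * n + 1), a₁ k
  set a₂ := extendSeq a₁ (2 * n + 1) B
  set U₁ := extendSets U (2 * n) z r₁
  -- for condition (5): the children of the sets inside `U_Φ` are spread apart, all others huddle
  obtain ⟨w, e, he, hw_inj, hw_near, hw_in, hw_out⟩ := exists_separated_or_clustered_points hperf
    (validTuples a₂ (2 * n + 2)) (fun q => z q.dropLast) (half_pos hr₁)
    (fun q => U₁ q.dropLast ⊆ U₁ (PhiIdx Ψ a₂ n))
  obtain ⟨r₂, hr₂, ⟨hr₂₁, hr₂e⟩, hw_sep⟩ := (((eventually_lt_nhds (half_pos hr₁)).and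
    (eventually_lt_nhds (by positivity : 0 < e / 16))).and
      (eventually_forall_mul_lt_dist _ hw_inj 6)).exists_gt
  have hw_sub : ∀ q ∈ validTuples a₂ (2 * n + 2), closedBall (w q) r₂ ⊆ ball (z q.dropLast) r₁ :=
    fun q hq => closedBall_subset_ball' (by linarith [hw_near q hq])
  have hz_sub' : ∀ q ∈ validTuples a₁ (2 * n + 1), 1 ≤ 2 * n → closedBall (z q) r₁ ⊆ U q.dropLast :=
    fun q hq hn => by
      rw [← topLevelSet_of_ne_zero (U := U) (by omega : n ≠ 0) q.dropLast]
      exact hz_sub q hq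
  have hπ' := hπ.extend hA₂ hA le_rfl hr₁ hz_sub' hz_sep hr₂ hw_sub hw_sep
    (balancedAt_extendSets hr₂ (by linarith) hw_in hw_out)
  have ha₂ : a₂ (2 * n + 1) = B := extendSeq_of_le le_rfl
  refine ⟨B, w, r₂, ha₂ ▸ hπ'.1 (2 * n + 1) (by omega), hπ', fun p hp u hu => ?_⟩
  have hq : p ++ [u] ∈ validTuples a₂ (2 * n + 2) :=
    mem_validTuples_extendSeq_succ.2 ⟨p, hp, u, hu, rfl⟩
  rw [extendSets_of_lt_length (by simp [(mem_validTuples.1 hp).2])]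
  simpa using ball_subset_closedBall.trans (hw_sub _ hq)

theorem IsBalancedScheme.exists_refinement_near (hperf : ∀ x : X, (𝓝[≠] x).NeBot)
    (hπ : IsBalancedScheme Ψ n a U b) (hA₂ : 2 ≤ A)
    (hA : 2 * n * ∏ k ∈ Finset.range (2 * n), a k ≤ A) {y : List ℕ → ℕ → X}
    (hy : ∀ l ∈ validTuples a (2 * n), ∀ k, y l k ∈ topLevelSet U n l) {δ : ℝ} (hδ : 0 < δ) :
    ∃ (a' : ℕ → ℕ) (U' : List ℕ → Set X) (b' : ℕ → ℝ),
      IsBalancedScheme Ψ (n + 1) a' U' b' ∧ SchemeConsistent n a a' U U' ∧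
      (∀ q ∈ validTuples a' (2 * (n + 1)), ∃ l ∈ validTuples a (2 * n), ∃ k,
        U' q ⊆ ball (y l k) δ) ∧
      ∀ l ∈ validTuples a (2 * n), ∀ k < A, ∃ q ∈ validTuples a' (2 * (n + 1)),
        U' q ⊆ ball (y l k) δ := by
  set S : List ℕ → Set X := fun q =>
    ball (y q.dropLast (q.getLastD 0)) δ ∩ topLevelSet U n q.dropLast
  have hS : ∀ q ∈ validTuples (extendSeq a (2 * n) A) (2 * n + 1),
      IsOpen (S q) ∧ (S q).Nonempty := by
    intro q hq
    obtain ⟨l, hl, k, -, rfl⟩ := mem_validTuples_extendSeq_succ.1 hq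
    simp only [S, List.dropLast_concat, List.getLastD_concat]
    exact ⟨isOpen_ball.inter (hπ.isOpen_topLevelSet hl), _, mem_ball_self hδ, hy l hl k⟩
  obtain ⟨z, r₁, hr₁, hz_sub, hz_sep⟩ := exists_separated_closedBalls hperf _ hS 6
  have hz_near : ∀ l ∈ validTuples a (2 * n), ∀ k < A, ball (z (l ++ [k])) r₁ ⊆ ball (y l k) δ :=
    fun l hl k hk => by
      simpa [S] using ball_subset_closedBall.trans
        ((hz_sub _ (mem_validTuples_extendSeq_succ.2 ⟨l, hl, k, hk, rfl⟩)).trans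
          Set.inter_subset_left)
  obtain ⟨B, w, r₂, hB, hπ', hsub⟩ :=
    hπ.exists_extension hperf hA₂ hA hr₁ (fun q hq => (hz_sub q hq).trans Set.inter_subset_right)
      hz_sep
  refine ⟨_, _, _, hπ', schemeConsistent_extend B z w r₁ r₂, fun q hq => ?_, fun l hl k hk => ?_⟩
  · obtain ⟨p, hp, u, hu, rfl⟩ := (mem_validTuples_extendSeq_succ (m := 2 * n + 1)).1 hq
    obtain ⟨l, hl, k, hk, rfl⟩ := mem_validTuples_extendSeq_succ.1 hp
    exact ⟨l, hl, k, (hsub _ hp u hu).trans (hz_near l hl k hk)⟩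
  · have hp := mem_validTuples_extendSeq_succ.2 ⟨l, hl, k, hk, rfl⟩
    exact ⟨_, mem_validTuples_extendSeq_succ.2 ⟨_, hp, 0, hB, rfl⟩,
      (hsub _ hp 0 hB).trans (hz_near l hl k hk)⟩

end Construction

theorem balanced_scheme_refinement_general
    {X : Type*} [MetricSpace X] [Nonempty X]
    (hperf : ∀ x : X, (nhdsWithin x {x}ᶜ).NeBot)
    (Ψ : ℕ → List ℕ)
    (n : ℕ) (a : ℕ → ℕ) (U : List ℕ → Set X) (b : ℕ → ℝ)
    (hπ : IsBalancedScheme Ψ n a U b)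
    (V : Set (NonemptyCompacts X)) (hVopen : IsOpen V) (hVne : V.Nonempty)
    (hVsub : V ⊆ SchemeSet a U n) :
    ∃ (a' : ℕ → ℕ) (U' : List ℕ → Set X) (b' : ℕ → ℝ),
      IsBalancedScheme Ψ (n + 1) a' U' b' ∧ SchemeConsistent n a a' U U' ∧
        SchemeSet a' U' (n + 1) ⊆ V := by
  obtain ⟨K₀, hK₀⟩ := hVne
  obtain ⟨ε, hε, hball⟩ := Metric.isOpen_iff.1 hVopen K₀ hK₀
  obtain ⟨N, y, hy, hnet⟩ := K₀.isCompact.exists_net_in_cover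
    (subset_iUnion_topLevelSet_of_mem_schemeSet (hVsub hK₀))
    (fun l hl => inter_topLevelSet_nonempty_of_mem_schemeSet (hVsub hK₀) hl)
    (by positivity : 0 < ε / 4)
  obtain ⟨a', U', b', hπ', hcons, hfar, hnear⟩ := hπ.exists_refinement_near hperf
    (A := max (max 2 (2 * n * ∏ k ∈ Finset.range (2 * n), a k)) N)
    ((le_max_left _ _).trans (le_max_left _ _)) ((le_max_right _ _).trans (le_max_left _ _))
    (fun l hl k => (hy l hl k).2) (by positivity : 0 < ε / 4)
  refine ⟨a', U', b', hπ', hcons, fun K hK => hball (mem_ball.2 ?_)⟩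
  refine (dist_le_of_mem_schemeSet n.succ_ne_zero hK (by positivity : 0 ≤ ε / 2) ?_ ?_).trans_lt
    (by linarith)
  · intro q hq x hx
    obtain ⟨l, hl, k, hsub⟩ := hfar q hq
    exact ⟨y l k, (hy l hl k).1, by linarith [mem_ball.1 (hsub hx)]⟩
  · intro x hx
    obtain ⟨l, hl, k, hk, hxy⟩ := hnet x hx
    obtain ⟨q, hq, hsub⟩ := hnear l hl k (hk.trans_le (le_max_right _ _))
    exact ⟨q, hq, fun x' hx' => by linarith [dist_triangle x (y l k) x', mem_ball'.1 (hsub hx')]⟩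

/-- Lemma: in a non-empty perfect Polish space, given a balanced scheme `π` of size `n`
and a non-empty open set `𝒱 ⊆ 𝒰(π)` in the hyperspace `K(X)`, there is a balanced scheme
`π'` of size `n+1` consistent with `π` such that `𝒰(π') ⊆ 𝒱`. -/
theorem balanced_scheme_refinement
    {X : Type*} [MetricSpace X] [Nonempty X] [CompleteSpace X] [SeparableSpace X]
    (hperf : ∀ x : X, (nhdsWithin x {x}ᶜ).NeBot)
    (Ψ : ℕ → List ℕ) (hΨsurj : ∀ l : List ℕ, ∃ m, Ψ m = l)
    (hΨlen : ∀ m, (Ψ m).length ≤ 2 * m + 1)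
    (n : ℕ) (a : ℕ → ℕ) (U : List ℕ → Set X) (b : ℕ → ℝ)
    (hπ : IsBalancedScheme Ψ n a U b)
    (V : Set (NonemptyCompacts X)) (hVopen : IsOpen V) (hVne : V.Nonempty)
    (hVsub : V ⊆ SchemeSet a U n) :
    ∃ (a' : ℕ → ℕ) (U' : List ℕ → Set X) (b' : ℕ → ℝ),
      IsBalancedScheme Ψ (n + 1) a' U' b' ∧ SchemeConsistent n a a' U U' ∧
        SchemeSet a' U' (n + 1) ⊆ V :=
  balanced_scheme_refinement_general hperf Ψ n a U b hπ V hVopen hVne hVsub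
end

section
/- Let (U_i)_{i∈ℕ} be pairwise disjoint non-empty open subsets of a topological space Y whose union is dense in Y, and for each i let B_i be a countable basis of U_i. Then one can choose non-empty open sets V_{n(j)} ∈ ⋃_i B_i and pairwise disjoint non-empty open sets W_j ⊆ V_{n(j)} (j ∈ ℕ) such that ⋃_j W_j is dense in Y. -/
open Set

/-!
The greedy choice can be replaced by a maximal pairwise disjoint subfamily `F` of the countable
family `⋃ i, B i` (Zorn), taking `V = W` an enumeration of `F`. Every non-empty open set contains
a member of `⋃ i, B i`, which by maximality meets a member of `F`; so `⋃₀ F` is dense. Density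
then puts a member of `F` inside each `U i`, so `F` is infinite.
-/

theorem Set.Countable.exists_injective_range_eq {α : Type*} {s : Set α} (hc : s.Countable)
    (hi : s.Infinite) : ∃ f : ℕ → α, Function.Injective f ∧ range f = s := by
  have := hc.to_subtype
  have := hi.to_subtype
  obtain ⟨e⟩ : Nonempty (ℕ ≃ s) := inferInstance
  exact ⟨Subtype.val ∘ e, Subtype.val_injective.comp e.injective, by
    rw [EquivLike.range_comp, Subtype.range_coe]⟩

theorem Set.exists_pairwiseDisjoint_subset_forall_not_disjoint {α : Type*} (C : Set (Set α)) :
    ∃ F ⊆ C, F.PairwiseDisjoint id ∧ ∀ c ∈ C, c.Nonempty → ∃ f ∈ F, ¬Disjoint c f := by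
  obtain ⟨F, ⟨hFC, hFdisj⟩, hFmax⟩ :=
    zorn_subset {F : Set (Set α) | F ⊆ C ∧ F.PairwiseDisjoint id} fun K hK hchain =>
      ⟨⋃₀ K, ⟨sUnion_subset fun F hF => (hK hF).1,
        (hchain.pairwiseDisjoint_sUnion id).2 fun F hF => (hK hF).2⟩,
        fun _ => subset_sUnion_of_mem⟩
  refine ⟨F, hFC, hFdisj, fun c hcC hc => ?_⟩
  by_contra! hdisj
  have hcF : c ∈ F := hFmax ⟨insert_subset hcC hFC, hFdisj.insert fun f hf _ => hdisj f hf⟩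
    (subset_insert c F) (mem_insert c F)
  exact hc.ne_empty (disjoint_self.1 (hdisj c hcF))

theorem exists_pairwiseDisjoint_subset_dense_sUnion {Y : Type*} [TopologicalSpace Y]
    {C : Set (Set Y)} (hC : ∀ O, IsOpen O → O.Nonempty → ∃ c ∈ C, c.Nonempty ∧ c ⊆ O) :
    ∃ F ⊆ C, F.PairwiseDisjoint id ∧ Dense (⋃₀ F) := by
  obtain ⟨F, hFC, hFdisj, hFmeets⟩ := exists_pairwiseDisjoint_subset_forall_not_disjoint C
  refine ⟨F, hFC, hFdisj, dense_iff_inter_open.2 fun O hO hOne => ?_⟩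
  obtain ⟨c, hcC, hc, hcO⟩ := hC O hO hOne
  obtain ⟨f, hfF, hcf⟩ := hFmeets c hcC hc
  obtain ⟨x, hxc, hxf⟩ := not_disjoint_iff.1 hcf
  exact ⟨x, hcO hxc, f, hfF, hxf⟩

theorem Set.infinite_of_dense_sUnion {Y ι : Type*} [TopologicalSpace Y] [Infinite ι]
    {U : ι → Set Y} (hUopen : ∀ i, IsOpen (U i)) (hUne : ∀ i, (U i).Nonempty)
    (hUdisj : Pairwise fun i j => Disjoint (U i) (U j)) {F : Set (Set Y)}
    (hFdense : Dense (⋃₀ F)) (hFU : ∀ f ∈ F, ∃ i, f ⊆ U i) : F.Infinite := by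
  have hmeets : ∀ i, ∃ f ∈ F, (U i ∩ f).Nonempty := fun i => by
    obtain ⟨x, hxU, f, hfF, hxf⟩ := hFdense.inter_open_nonempty _ (hUopen i) (hUne i)
    exact ⟨f, hfF, x, hxU, hxf⟩
  choose g hgF hgU using hmeets
  have hindex : ∀ i j, g i ⊆ U j → i = j := fun i j hsub =>
    hUdisj.eq (not_disjoint_iff_nonempty_inter.2 ((hgU i).mono (inter_subset_inter_right _ hsub)))
  refine infinite_of_injective_forall_mem (f := g) (fun i i' hii' => ?_) hgF
  obtain ⟨j, hj⟩ := hFU (g i) (hgF i)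
  exact (hindex i j hj).trans (hindex i' j (hii' ▸ hj)).symm

/-- Greedy selection lemma: if `(U i)` are pairwise disjoint non-empty open sets with dense
union in a topological space `Y` and each `B i` is a countable basis of the subspace `U i`
(a countable family of non-empty open subsets of `U i` refining every non-empty open subset
of `U i`), then one can choose sets `V j ∈ ⋃ i, B i` and pairwise disjoint non-empty open
sets `W j ⊆ V j` whose union is dense in `Y`. -/
theorem greedy_disjoint_dense_selection
    {Y : Type*} [TopologicalSpace Y] (U : ℕ → Set Y)
    (hUopen : ∀ i, IsOpen (U i)) (hUne : ∀ i, (U i).Nonempty)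
    (hUdisj : Pairwise fun i j => Disjoint (U i) (U j))
    (hUdense : Dense (⋃ i, U i))
    (B : ℕ → Set (Set Y)) (hBcount : ∀ i, (B i).Countable)
    (hBopen : ∀ i, ∀ W ∈ B i, IsOpen W ∧ W.Nonempty ∧ W ⊆ U i)
    (hBbasis : ∀ i, ∀ V : Set Y, IsOpen V → V.Nonempty → V ⊆ U i → ∃ W ∈ B i, W ⊆ V) :
    ∃ V W : ℕ → Set Y,
      (∀ j, V j ∈ ⋃ i, B i) ∧
      (∀ j, IsOpen (W j) ∧ (W j).Nonempty ∧ W j ⊆ V j) ∧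
      (Pairwise fun j j' => Disjoint (W j) (W j')) ∧
      Dense (⋃ j, W j) := by
  have hBmem : ∀ W ∈ ⋃ i, B i, ∃ i, IsOpen W ∧ W.Nonempty ∧ W ⊆ U i := fun W hW => by
    obtain ⟨i, hWi⟩ := mem_iUnion.1 hW
    exact ⟨i, hBopen i W hWi⟩
  have hpiBase : ∀ O, IsOpen O → O.Nonempty → ∃ W ∈ ⋃ i, B i, W.Nonempty ∧ W ⊆ O := by
    intro O hO hOne
    obtain ⟨y, hyO, i, ⟨i, rfl⟩, hyi⟩ := hUdense.inter_open_nonempty O hO hOne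
    obtain ⟨W, hWB, hWsub⟩ :=
      hBbasis i (O ∩ U i) (hO.inter (hUopen i)) ⟨y, hyO, hyi⟩ inter_subset_right
    exact ⟨W, mem_iUnion.2 ⟨i, hWB⟩, (hBopen i W hWB).2.1, hWsub.trans inter_subset_left⟩
  obtain ⟨F, hFB, hFdisj, hFdense⟩ := exists_pairwiseDisjoint_subset_dense_sUnion hpiBase
  have hFinf : F.Infinite := infinite_of_dense_sUnion hUopen hUne hUdisj hFdense fun W hW =>
    (hBmem W (hFB hW)).imp fun _ h => h.2.2
  obtain ⟨e, he, hrange⟩ := ((countable_iUnion hBcount).mono hFB).exists_injective_range_eq hFinf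
  have heF : ∀ j, e j ∈ F := fun j => hrange ▸ mem_range_self j
  refine ⟨e, e, fun j => hFB (heF j), fun j => ?_,
    fun j j' hjj' => hFdisj (heF j) (heF j') (he.ne hjj'), ?_⟩
  · obtain ⟨_, hopen, hne, _⟩ := hBmem (e j) (hFB (heF j))
    exact ⟨hopen, hne, subset_rfl⟩
  · rwa [← sUnion_range, hrange]
end
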